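/- Let N ≥ 1, let Q be a real symmetric N×N matrix, q, d ∈ ℝ^N, γ, c, b ∈ ℝ, α₁, α₂ ∈ ℝ with α₂ − α₁ ≠ 2, and k ∈ ℝ. Set β := (α₁−α₂)/2 and α̃ := 2α₁/(α₁−α₂+2). Let ℒ be the operator with parameters (Q, q, γ, d, c, b, α₁, α₂), and set q̃ := (β+1)q, γ̃ := (β+1)²γ, Ã := [[Q, q̃ᵗ],[q̃, γ̃]], ṽ := (2kq + d, (β+1)(c+(2k+β)γ)), b̃ := b − k(c+(k−1)γ). Then for every u ∈ C²(ℝ^{N+1}_+) and every point of ℝ^{N+1}_+ one has ℒ(T_{k,β}u) = T_{k,β}( y^{α̃} Tr(Ã D²u) + y^{α̃−1} ṽ·∇u − b̃ y^{α̃−2} u ), where D²u and ∇u denote the full Hessian and gradient in (x,y). -/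

import Mathlib

open MeasureTheory Real

noncomputable section

/-- Points of `ℝ^{N+1} = ℝ^N × ℝ`. -/
abbrev Pt (N : ℕ) := (Fin N → ℝ) × ℝ

/-- Directional (partial) derivative of `u` at `z` in the direction `v`. -/
def pd {N : ℕ} (v : Pt N) (u : Pt N → ℝ) (z : Pt N) : ℝ := fderiv ℝ u z v

/-- The unit vector in the `i`-th `x`-direction. -/
def ex {N : ℕ} (i : Fin N) : Pt N := (Pi.single i 1, 0)

/-- The unit vector in the `y`-direction. -/
def ey {N : ℕ} : Pt N := (0, 1)

/-- The map `T_{k,β} u (x, y) = |β+1|^{1/p} y^k u(x, y^{β+1})`. -/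
def Tkb (N : ℕ) (p k β : ℝ) (u : Pt N → ℝ) : Pt N → ℝ := fun z =>
  |β + 1| ^ (1 / p) * z.2 ^ k * u (z.1, z.2 ^ (β + 1))

/-- The degenerate operator
`ℒu = y^{α₁} Tr(Q D²_x u) + 2 y^{(α₁+α₂)/2} q·∇_x(∂_y u) + γ y^{α₂} ∂²_{yy} u
      + y^{(α₁+α₂)/2−1} d·∇_x u + c y^{α₂−1} ∂_y u − b y^{α₂−2} u`. -/
def opL {N : ℕ} (Q : Matrix (Fin N) (Fin N) ℝ) (q d : Fin N → ℝ) (γ c b α₁ α₂ : ℝ)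
    (u : Pt N → ℝ) (z : Pt N) : ℝ :=
  z.2 ^ α₁ * (∑ i, ∑ j, Q i j * pd (ex i) (pd (ex j) u) z)
    + 2 * z.2 ^ ((α₁ + α₂) / 2) * (∑ i, q i * pd (ex i) (pd ey u) z)
    + γ * z.2 ^ α₂ * pd ey (pd ey u) z
    + z.2 ^ ((α₁ + α₂) / 2 - 1) * (∑ i, d i * pd (ex i) u z)
    + c * z.2 ^ (α₂ - 1) * pd ey u z
    - b * z.2 ^ (α₂ - 2) * u z

/-- The `i`-th coordinate direction of `ℝ^{N+1}`, `(x_1, …, x_N, y)`. -/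
def bvec {N : ℕ} (i : Fin (N + 1)) : Pt N :=
  if h : (i : ℕ) < N then ex ⟨i, h⟩ else ey

/-- The block matrix `[[Q, qᵗ], [q, γ]]`. -/
def blockA {N : ℕ} (Q : Matrix (Fin N) (Fin N) ℝ) (q : Fin N → ℝ) (γ : ℝ) :
    Matrix (Fin (N + 1)) (Fin (N + 1)) ℝ := Matrix.of fun i j =>
  if hi : (i : ℕ) < N then
    if hj : (j : ℕ) < N then Q ⟨i, hi⟩ ⟨j, hj⟩ else q ⟨i, hi⟩
  else if hj : (j : ℕ) < N then q ⟨j, hj⟩ else γ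

/-- `Tr (A D² u)` at the point `z`: `∑_{i,j} a_{ij} ∂²u/∂z_i∂z_j`. -/
def trHess {N : ℕ} (A : Matrix (Fin (N + 1)) (Fin (N + 1)) ℝ) (u : Pt N → ℝ) (z : Pt N) : ℝ :=
  ∑ i, ∑ j, A i j * pd (bvec i) (pd (bvec j) u) z

/-
`T_{k,β} u = a y^k u(x, y^{β+1})` is a weighted pullback `a y^m g(x, y^s)`, and this class is
closed under differentiation: `∂_{x_i}` passes through it, while `∂_y` produces
`a m y^{m-1} g(x, y^s)` and `a s y^{m+s-1} (∂_y g)(x, y^s)`. Applying this twice writes every term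
of `ℒ(T_{k,β} u)` as a power of `y` times a derivative of `u` at `(x, y^{β+1})`. For
`β = (α₁ - α₂)/2` these powers collapse to `y^{k + α₁ - j(β+1)}`, `j = 0, 1, 2`, which are the
powers `y^k (y^{β+1})^{α̃ - j}` on the right since `(β + 1) α̃ = α₁`; by symmetry of the Hessian
the mixed derivatives `∂_x ∂_y u` make up the off-diagonal blocks of `Ã`.
-/
open Filter Topology

section

variable {N : ℕ}

lemma isOpen_upperHalfSpace : IsOpen {w : Pt N | 0 < w.2} :=
  isOpen_lt continuous_const continuous_snd

lemma pd_congr {f g : Pt N → ℝ} {z : Pt N} (h : f =ᶠ[𝓝 z] g) (v : Pt N) :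
    pd v f z = pd v g z := by
  rw [pd, pd, h.fderiv_eq]

lemma pd_add {f g : Pt N → ℝ} {z : Pt N} (hf : DifferentiableAt ℝ f z)
    (hg : DifferentiableAt ℝ g z) (v : Pt N) :
    pd v (fun w => f w + g w) z = pd v f z + pd v g z := by
  rw [pd, fderiv_fun_add hf hg]
  rfl

lemma pd_pd_eq_fderiv_fderiv {u : Pt N → ℝ} {z : Pt N} (hu : ContDiffAt ℝ 2 u z) (v w : Pt N) :
    pd v (pd w u) z = fderiv ℝ (fderiv ℝ u) z v w := by
  have hd : DifferentiableAt ℝ (fderiv ℝ u) z :=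
    (hu.fderiv_right le_rfl).differentiableAt one_ne_zero
  change fderiv ℝ (fun y => fderiv ℝ u y w) z v = _
  simp [fderiv_clm_apply hd (differentiableAt_const w)]

lemma pd_comm {u : Pt N → ℝ} {z : Pt N} (hu : ContDiffAt ℝ 2 u z) (v w : Pt N) :
    pd v (pd w u) z = pd w (pd v u) z := by
  rw [pd_pd_eq_fderiv_fderiv hu, pd_pd_eq_fderiv_fderiv hu, hu.isSymmSndFDerivAt (by simp)]

lemma trHess_blockA (Q : Matrix (Fin N) (Fin N) ℝ) (q : Fin N → ℝ) (γ : ℝ)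
    {u : Pt N → ℝ} {w : Pt N} (hu : ContDiffAt ℝ 2 u w) :
    trHess (blockA Q q γ) u w
      = (∑ i, ∑ j, Q i j * pd (ex i) (pd (ex j) u) w)
        + 2 * (∑ i, q i * pd (ex i) (pd ey u) w) + γ * pd ey (pd ey u) w := by
  simp only [trHess, blockA, Matrix.of_apply, bvec, dite_mul, Finset.sum_dite_irrel,
    Fin.sum_univ_castSucc, Fin.val_castSucc, Fin.is_lt, ↓reduceDIte, Fin.eta, Fin.val_last,
    lt_self_iff_false, Finset.sum_add_distrib, pd_comm hu ey]
  ring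

lemma differentiableOn_pd {u : Pt N → ℝ} {s : Set (Pt N)} (hs : IsOpen s)
    (hu : ContDiffOn ℝ 2 u s) (v : Pt N) : DifferentiableOn ℝ (pd v u) s :=
  fun _ hz => (((hu.contDiffAt (hs.mem_nhds hz)).fderiv_right le_rfl).differentiableAt
    one_ne_zero |>.clm_apply (differentiableAt_const v)).differentiableWithinAt

end

section WeightedPullback

variable {N : ℕ}

def weightedPullback (a s m : ℝ) (g : Pt N → ℝ) (w : Pt N) : ℝ :=
  a * w.2 ^ m * g (w.1, w.2 ^ s)

lemma Tkb_eq_weightedPullback (p k β : ℝ) (u : Pt N → ℝ) :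
    Tkb N p k β u = weightedPullback (|β + 1| ^ (1 / p)) (β + 1) k u := rfl

variable {a s m : ℝ} {g : Pt N → ℝ} {z : Pt N}

lemma DifferentiableOn.differentiableAt_rpow_snd (hg : DifferentiableOn ℝ g {w : Pt N | 0 < w.2})
    (hz : 0 < z.2) (s : ℝ) : DifferentiableAt ℝ g (z.1, z.2 ^ s) :=
  hg.differentiableAt (isOpen_upperHalfSpace.mem_nhds (Real.rpow_pos_of_pos hz s))

lemma hasFDerivAt_weightedPullback (hz : 0 < z.2) (hg : DifferentiableAt ℝ g (z.1, z.2 ^ s)) :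
    HasFDerivAt (weightedPullback a s m g)
      ((a * z.2 ^ m) • (fderiv ℝ g (z.1, z.2 ^ s)).comp
          ((ContinuousLinearMap.fst ℝ _ _).prod
            ((s * z.2 ^ (s - 1)) • ContinuousLinearMap.snd ℝ (Fin N → ℝ) ℝ))
        + g (z.1, z.2 ^ s) • (a * (m * z.2 ^ (m - 1))) • ContinuousLinearMap.snd ℝ _ _) z := by
  have hφ : HasFDerivAt (fun w : Pt N => (w.1, w.2 ^ s))
      ((ContinuousLinearMap.fst ℝ _ _).prod
        ((s * z.2 ^ (s - 1)) • ContinuousLinearMap.snd ℝ (Fin N → ℝ) ℝ)) z :=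
    hasFDerivAt_fst.prodMk (hasFDerivAt_snd.rpow_const (Or.inl hz.ne'))
  have hweight : HasFDerivAt (fun w : Pt N => a * w.2 ^ m)
      ((a * (m * z.2 ^ (m - 1))) • ContinuousLinearMap.snd ℝ (Fin N → ℝ) ℝ) z := by
    simpa [smul_smul] using (hasFDerivAt_snd.rpow_const (p := m) (Or.inl hz.ne')).const_mul a
  exact hweight.mul (hg.hasFDerivAt.comp z hφ)

lemma differentiableAt_weightedPullback (hz : 0 < z.2)
    (hg : DifferentiableOn ℝ g {w : Pt N | 0 < w.2}) :
    DifferentiableAt ℝ (weightedPullback a s m g) z :=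
  (hasFDerivAt_weightedPullback hz (hg.differentiableAt_rpow_snd hz s)).differentiableAt

lemma pd_ex_weightedPullback (hz : 0 < z.2) (hg : DifferentiableOn ℝ g {w : Pt N | 0 < w.2})
    (i : Fin N) :
    pd (ex i) (weightedPullback a s m g) z = weightedPullback a s m (pd (ex i) g) z := by
  simp [pd, (hasFDerivAt_weightedPullback hz (hg.differentiableAt_rpow_snd hz s)).fderiv, ex,
    weightedPullback]

lemma pd_ey_weightedPullback (hz : 0 < z.2) (hg : DifferentiableOn ℝ g {w : Pt N | 0 < w.2}) :
    pd ey (weightedPullback a s m g) z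
      = weightedPullback (a * m) s (m - 1) g z
        + weightedPullback (a * s) s (m + s - 1) (pd ey g) z := by
  have hvec : ((0 : Fin N → ℝ), s * z.2 ^ (s - 1)) = (s * z.2 ^ (s - 1)) • ((0, 1) : Pt N) := by
    simp
  simp only [pd, (hasFDerivAt_weightedPullback hz (hg.differentiableAt_rpow_snd hz s)).fderiv, ey,
    add_apply, smul_apply, ContinuousLinearMap.comp_apply, ContinuousLinearMap.prod_apply,
    ContinuousLinearMap.coe_fst', ContinuousLinearMap.coe_snd', smul_eq_mul, mul_one,
    weightedPullback]
  rw [hvec, map_smul, smul_eq_mul, show m + s - 1 = m + (s - 1) by ring, Real.rpow_add hz]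
  ring

lemma pd_pd_ex_weightedPullback (hz : 0 < z.2)
    (hg : DifferentiableOn ℝ g {w : Pt N | 0 < w.2}) (v : Pt N) (i : Fin N) :
    pd v (pd (ex i) (weightedPullback a s m g)) z
      = pd v (weightedPullback a s m (pd (ex i) g)) z :=
  pd_congr (eventually_of_mem (isOpen_upperHalfSpace.mem_nhds hz)
    fun _ hw => pd_ex_weightedPullback hw hg i) v

lemma pd_pd_ey_weightedPullback (hz : 0 < z.2)
    (hg : ContDiffOn ℝ 2 g {w : Pt N | 0 < w.2}) (v : Pt N) :
    pd v (pd ey (weightedPullback a s m g)) z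
      = pd v (weightedPullback (a * m) s (m - 1) g) z
        + pd v (weightedPullback (a * s) s (m + s - 1) (pd ey g)) z := by
  have hg1 := hg.differentiableOn (by norm_num)
  rw [← pd_add (differentiableAt_weightedPullback hz hg1)
    (differentiableAt_weightedPullback hz (differentiableOn_pd isOpen_upperHalfSpace hg ey))]
  exact pd_congr (eventually_of_mem (isOpen_upperHalfSpace.mem_nhds hz)
    fun _ hw => pd_ey_weightedPullback hw hg1) v

lemma sum_mul_weightedPullback {ι : Type*} (t : Finset ι) (c : ι → ℝ) (f : ι → Pt N → ℝ) :
    ∑ i ∈ t, c i * weightedPullback a s m (f i) z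
      = a * z.2 ^ m * ∑ i ∈ t, c i * f i (z.1, z.2 ^ s) := by
  rw [Finset.mul_sum]
  exact Finset.sum_congr rfl fun i _ => by rw [weightedPullback]; ring

end WeightedPullback

lemma opL_Tkb {N : ℕ} (Q : Matrix (Fin N) (Fin N) ℝ) (q d : Fin N → ℝ)
    (γ c b α₁ α₂ k p β : ℝ) (hβ : β = (α₁ - α₂) / 2)
    {u : Pt N → ℝ} (hu : ContDiffOn ℝ 2 u {z : Pt N | 0 < z.2}) {z : Pt N} (hz : 0 < z.2) :
    let w := (z.1, z.2 ^ (β + 1))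
    opL Q q d γ c b α₁ α₂ (Tkb N p k β u) z
      = |β + 1| ^ (1 / p) * z.2 ^ k *
          (z.2 ^ α₁ * ((∑ i, ∑ j, Q i j * pd (ex i) (pd (ex j) u) w)
              + 2 * (β + 1) * (∑ i, q i * pd (ex i) (pd ey u) w)
              + (β + 1) ^ 2 * γ * pd ey (pd ey u) w)
            + z.2 ^ (α₁ - (β + 1)) * ((∑ i, (2 * k * q i + d i) * pd (ex i) u w)
              + (β + 1) * (c + (2 * k + β) * γ) * pd ey u w)
            - (b - k * (c + (k - 1) * γ)) * z.2 ^ (α₁ - (β + 1) * 2) * u w) := by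
  intro w
  have hu1 := hu.differentiableOn (by norm_num)
  have hu2 := differentiableOn_pd isOpen_upperHalfSpace hu
  have hsplit : ∑ i, (2 * k * q i + d i) * pd (ex i) u w
      = 2 * k * ∑ i, q i * pd (ex i) u w + ∑ i, d i * pd (ex i) u w := by
    rw [Finset.mul_sum, ← Finset.sum_add_distrib]
    exact Finset.sum_congr rfl fun i _ => by ring
  rw [hsplit]
  simp only [opL, Tkb_eq_weightedPullback, pd_pd_ex_weightedPullback hz hu1,
    pd_pd_ey_weightedPullback hz hu, pd_ex_weightedPullback hz (hu2 _),
    pd_ey_weightedPullback hz (hu2 _), pd_ex_weightedPullback hz hu1,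
    pd_ey_weightedPullback hz hu1, mul_add, Finset.sum_add_distrib, sum_mul_weightedPullback,
    ← Finset.mul_sum]
  simp only [weightedPullback, w]
  obtain rfl : α₂ = α₁ - 2 * β := by linarith
  -- every power of `z.2` becomes a monomial in `z.2 ^ α₁`, `z.2 ^ β`, `z.2 ^ k` and `z.2`
  ring_nf
  simp only [Real.rpow_add hz, Real.rpow_sub hz, Real.rpow_neg hz.le, Real.rpow_mul hz.le,
    Real.rpow_one, Real.rpow_two]
  field_simp
  ring

theorem statement8_general (N : ℕ)
    (Q : Matrix (Fin N) (Fin N) ℝ) (q d : Fin N → ℝ)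
    (γ c b α₁ α₂ k p : ℝ) (hα : α₂ - α₁ ≠ 2)
    (β αt : ℝ) (hβ : β = (α₁ - α₂) / 2) (hαt : αt = 2 * α₁ / (α₁ - α₂ + 2))
    (u : Pt N → ℝ) (hu : ContDiffOn ℝ 2 u {z : Pt N | 0 < z.2}) :
    ∀ z : Pt N, 0 < z.2 →
      opL Q q d γ c b α₁ α₂ (Tkb N p k β u) z
        = Tkb N p k β
            (fun w =>
              w.2 ^ αt *
                  trHess (blockA Q (fun i => (β + 1) * q i) ((β + 1) ^ 2 * γ)) u w
                + w.2 ^ (αt - 1) *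
                    ((∑ i, (2 * k * q i + d i) * pd (ex i) u w)
                      + (β + 1) * (c + (2 * k + β) * γ) * pd ey u w)
                - (b - k * (c + (k - 1) * γ)) * w.2 ^ (αt - 2) * u w) z := by
  intro z hz
  have hαt' : (β + 1) * αt = α₁ := by
    rw [hαt, hβ]
    field_simp [show α₁ - α₂ + 2 ≠ 0 by contrapose! hα; linarith]
  have hw : (z.1, z.2 ^ (β + 1)) ∈ {w : Pt N | 0 < w.2} := Real.rpow_pos_of_pos hz _
  rw [opL_Tkb Q q d γ c b α₁ α₂ k p β hβ hu hz, Tkb,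
    trHess_blockA _ _ _ (hu.contDiffAt (isOpen_upperHalfSpace.mem_nhds hw))]
  simp only [← Real.rpow_mul hz.le, mul_sub, hαt', mul_one, mul_assoc, ← Finset.mul_sum]

/-- With `β = (α₁−α₂)/2` and `α̃ = 2α₁/(α₁−α₂+2)`,
`ℒ(T_{k,β} u) = T_{k,β}(y^{α̃} Tr(Ã D²u) + y^{α̃−1} ṽ·∇u − b̃ y^{α̃−2} u)`. -/
theorem statement8 (N : ℕ) (hN : 1 ≤ N)
    (Q : Matrix (Fin N) (Fin N) ℝ) (hQ : Q.IsSymm) (q d : Fin N → ℝ)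
    (γ c b α₁ α₂ k p : ℝ) (hα : α₂ - α₁ ≠ 2) (hp1 : 1 ≤ p)
    (β αt : ℝ) (hβ : β = (α₁ - α₂) / 2) (hαt : αt = 2 * α₁ / (α₁ - α₂ + 2))
    (u : Pt N → ℝ) (hu : ContDiffOn ℝ 2 u {z : Pt N | 0 < z.2}) :
    ∀ z : Pt N, 0 < z.2 →
      opL Q q d γ c b α₁ α₂ (Tkb N p k β u) z
        = Tkb N p k β
            (fun w =>
              w.2 ^ αt *
                  trHess (blockA Q (fun i => (β + 1) * q i) ((β + 1) ^ 2 * γ)) u w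
                + w.2 ^ (αt - 1) *
                    ((∑ i, (2 * k * q i + d i) * pd (ex i) u w)
                      + (β + 1) * (c + (2 * k + β) * γ) * pd ey u w)
                - (b - k * (c + (k - 1) * γ)) * w.2 ^ (αt - 2) * u w) z :=
  statement8_general N Q q d γ c b α₁ α₂ k p hα β αt hβ hαt u hu
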